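/- Let Δ be a quandle (a rack satisfying a^a = a for all a), let n ≥ 1, and let f : Δⁿ → Δⁿ be an arbitrary map. Define F' : Δ^{n+1} → Δ^{n+1} by F'(x₁,…,x_{n+1}) = (y₁,…,y_{n−1}, z, yₙ), where (y₁,…,yₙ) = f(x₁,…,xₙ) and z is the unique element of Δ with z^{yₙ} = x_{n+1} (this is the map assigned to the braid A·bₙ⁻¹ when f is assigned to A ∈ Bₙ). Then (x₁,…,x_{n+1}) is a fixed point of F' if and only if (x₁,…,xₙ) is a fixed point of f and x_{n+1} = xₙ. In particular the fixed point set of F' on Δ^{n+1} is in bijection with the fixed point set of f on Δⁿ. -/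

import Mathlib

/-!
Write `y = f(x₁,…,xₙ)`. The stabilized map fixes `x` exactly when `y` agrees with `x` in the
first `n - 1` places, `yₙ = x_{n+1}`, and `xₙ^{yₙ} = x_{n+1}`. Substituting the second condition
into the third gives `xₙ^{x_{n+1}} = x_{n+1} = x_{n+1}^{x_{n+1}}`, and right cancellation
forces `xₙ = x_{n+1}`. So the fixed points upstairs are the fixed points of `f` with the
last coordinate repeated.
-/

/-- The map of `Δ^{n+1}` assigned to the negatively stabilized braid `A·bₙ⁻¹`,
when `f : Δⁿ → Δⁿ` is the map assigned to `A ∈ Bₙ`: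
`(x₁,…,x_{n+1}) ↦ (y₁,…,y_{n−1}, z, yₙ)` where `y = f(x₁,…,xₙ)` and
`z = rinv x_{n+1} yₙ` is the unique element with `z^{yₙ} = x_{n+1}`. -/
def negStab {Δ : Type*} (rinv : Δ → Δ → Δ) {n : ℕ} (hn : 1 ≤ n)
    (f : (Fin n → Δ) → (Fin n → Δ)) (x : Fin (n + 1) → Δ) : Fin (n + 1) → Δ :=
  fun j =>
    if h : (j : ℕ) < n - 1 then f (Fin.init x) ⟨j, by omega⟩
    else if (j : ℕ) = n - 1 then
      rinv (x (Fin.last n)) (f (Fin.init x) ⟨n - 1, by omega⟩)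
    else f (Fin.init x) ⟨n - 1, by omega⟩

section Rack

variable {Δ : Type*} {op rinv : Δ → Δ → Δ}

theorem rinv_eq_iff (hinv : ∀ a b : Δ, ∃! c : Δ, op c b = a)
    (hrinv : ∀ a b : Δ, op (rinv a b) b = a) {a b c : Δ} : rinv a b = c ↔ op c b = a :=
  ⟨fun h => h ▸ hrinv a b, fun h => (hinv a b).unique (hrinv a b) h⟩

theorem rinv_self_eq_iff (hinv : ∀ a b : Δ, ∃! c : Δ, op c b = a)
    (hq : ∀ a : Δ, op a a = a) (hrinv : ∀ a b : Δ, op (rinv a b) b = a) {a c : Δ} :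
    rinv a a = c ↔ c = a := by
  rw [rinv_eq_iff hinv hrinv]
  exact ⟨fun h => (hinv a a).unique h (hq a), fun h => h ▸ hq a⟩

end Rack

theorem Fin.snoc_eq_iff {α : Type*} {n : ℕ} {p : Fin n → α} {a : α} {q : Fin (n + 1) → α} :
    Fin.snoc p a = q ↔ p = Fin.init q ∧ a = q (Fin.last n) := by
  conv_lhs => rw [← Fin.snoc_init_self q]
  exact Fin.snoc_inj

def Fin.initSubtypeEquiv {α : Type*} {n : ℕ} (P : (Fin n → α) → Prop) (g : (Fin n → α) → α) :
    {x : Fin (n + 1) → α // P (Fin.init x) ∧ x (Fin.last n) = g (Fin.init x)} ≃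
      {u : Fin n → α // P u} where
  toFun x := ⟨Fin.init x.1, x.2.1⟩
  invFun u :=
    ⟨Fin.snoc u.1 (g u.1), by simpa only [Fin.init_snoc, Fin.snoc_last, and_true] using u.2⟩
  left_inv x := Subtype.ext <| by
    change Fin.snoc (Fin.init x.1) (g (Fin.init x.1)) = x.1
    rw [← x.2.2, Fin.snoc_init_self]
  right_inv u := Subtype.ext (Fin.init_snoc (α := fun _ => α) _ _)

theorem negStab_eq_snoc_snoc {Δ : Type*} (rinv : Δ → Δ → Δ) {m : ℕ} (hn : 1 ≤ m + 1)
    (f : (Fin (m + 1) → Δ) → (Fin (m + 1) → Δ)) (x : Fin (m + 2) → Δ) :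
    negStab rinv hn f x =
      Fin.snoc (Fin.snoc (Fin.init (f (Fin.init x)))
        (rinv (x (Fin.last (m + 1))) (f (Fin.init x) (Fin.last m))))
        (f (Fin.init x) (Fin.last m)) := by
  funext j
  rcases j with ⟨j, hj⟩
  simp only [negStab, Fin.snoc, Fin.init, cast_eq, Fin.val_castLT]
  split_ifs <;> first | rfl | omega

theorem negStab_eq_self_iff {Δ : Type*} {op rinv : Δ → Δ → Δ}
    (hinv : ∀ a b : Δ, ∃! c : Δ, op c b = a) (hq : ∀ a : Δ, op a a = a)
    (hrinv : ∀ a b : Δ, op (rinv a b) b = a) {m : ℕ} (hn : 1 ≤ m + 1)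
    (f : (Fin (m + 1) → Δ) → (Fin (m + 1) → Δ)) (x : Fin (m + 2) → Δ) :
    negStab rinv hn f x = x ↔
      f (Fin.init x) = Fin.init x ∧ x (Fin.last (m + 1)) = Fin.init x (Fin.last m) := by
  set y := f (Fin.init x)
  set u := Fin.init x
  have hsplit : y = u ↔ Fin.init y = Fin.init u ∧ y (Fin.last m) = u (Fin.last m) := by
    conv_lhs => rw [← Fin.snoc_init_self y]
    exact Fin.snoc_eq_iff
  rw [negStab_eq_snoc_snoc, Fin.snoc_eq_iff, Fin.snoc_eq_iff]
  have hmid_iff (hlast : y (Fin.last m) = x (Fin.last (m + 1))) :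
      rinv (x (Fin.last (m + 1))) (y (Fin.last m)) = u (Fin.last m) ↔
        x (Fin.last (m + 1)) = u (Fin.last m) := by
    rw [hlast, rinv_self_eq_iff hinv hq hrinv, eq_comm]
  rw [hsplit]
  constructor
  · rintro ⟨⟨hinit, hmid⟩, hlast⟩
    have hx := (hmid_iff hlast).1 hmid
    exact ⟨⟨hinit, hlast.trans hx⟩, hx⟩
  · rintro ⟨⟨hinit, hy⟩, hx⟩
    have hlast := hy.trans hx.symm
    exact ⟨⟨hinit, (hmid_iff hlast).2 hx⟩, hlast⟩

/-- Markov move (negative stabilization) for quandles: `(x₁,…,x_{n+1})` is a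
fixed point of the negatively stabilized map iff `(x₁,…,xₙ)` is a fixed point
of `f` and `x_{n+1} = xₙ`; hence the fixed point sets are in bijection.  Here
`rinv a b` denotes the unique `z` with `z^b = a`. -/
theorem quandle_negative_markov {Δ : Type*} (op : Δ → Δ → Δ)
    (hinv : ∀ a b : Δ, ∃! c : Δ, op c b = a)
    (hq : ∀ a : Δ, op a a = a)
    (rinv : Δ → Δ → Δ)
    (hrinv : ∀ a b : Δ, op (rinv a b) b = a)
    {n : ℕ} (hn : 1 ≤ n) (f : (Fin n → Δ) → (Fin n → Δ)) :
    (∀ x : Fin (n + 1) → Δ,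
      negStab rinv hn f x = x ↔
        (f (Fin.init x) = Fin.init x ∧
          x (Fin.last n) = x ⟨n - 1, by omega⟩)) ∧
    Nonempty
      ({x : Fin (n + 1) → Δ // negStab rinv hn f x = x} ≃
        {x : Fin n → Δ // f x = x}) := by
  obtain ⟨m, rfl⟩ : ∃ m, n = m + 1 := ⟨n - 1, by omega⟩
  have hfix := negStab_eq_self_iff hinv hq hrinv hn f
  exact ⟨hfix, ⟨(Equiv.subtypeEquivRight hfix).trans
    (Fin.initSubtypeEquiv (fun u => f u = u) (fun u => u (Fin.last m)))⟩⟩
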